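/- arXiv:1902.10535 — 2 statements merged into one kernel-verified Lean document; each statement's English description precedes it below -/
import Mathlib

section
/- Let P be a preference profile on agent sets U and W of size n each that admits an (n−1)-robust matching M. Then for every unmatched pair {x,y} of mutually acceptable agents (i.e., {x,y} ∉ M), it holds that rk_x(y) + rk_y(x) ≥ n. -/
open Finset

/-- A preference profile: each agent on side `U` has a strict (nodup), possibly
incomplete preference list over the agents of `W`, and vice versa.  The rank of
an agent `y` in the list `l` of an agent `x` is `l.indexOf y` (the number of
agents that `x` strictly prefers to `y`). -/
structure Profile (U W : Type) where
  prefU : U → List W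
  prefW : W → List U
  nodupU : ∀ u, (prefU u).Nodup
  nodupW : ∀ w, (prefW w).Nodup

/-- A matching between `U` and `W`. -/
structure Matching (U W : Type) where
  mu : U → Option W
  mw : W → Option U
  consistent : ∀ u w, mu u = some w ↔ mw w = some u

variable {U W : Type} [DecidableEq U] [DecidableEq W]

/-- `{u, w}` is a blocking pair of `M` in `P`: they are mutually acceptable,
not matched together, and each strictly prefers the other to its current
partner (or is unmatched). -/
def IsBlocking (P : Profile U W) (M : Matching U W) (u : U) (w : W) : Prop :=
  w ∈ P.prefU u ∧ u ∈ P.prefW w ∧ M.mu u ≠ some w ∧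
  (∀ w', M.mu u = some w' → (P.prefU u).idxOf w < (P.prefU u).idxOf w') ∧
  (∀ u', M.mw w = some u' → (P.prefW w).idxOf u < (P.prefW w).idxOf u')

/-- `M` is stable for `P`: it is individually rational (matched pairs are
mutually acceptable) and admits no blocking pair. -/
def IsStable (P : Profile U W) (M : Matching U W) : Prop :=
  (∀ u w, M.mu u = some w → w ∈ P.prefU u ∧ u ∈ P.prefW w) ∧
  ∀ u w, ¬ IsBlocking P M u w

/-- Number of discordant pairs (Kendall tau distance) between two lists. -/
def discordant {α : Type*} [DecidableEq α] (l1 l2 : List α) : ℕ :=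
  ((l1.toFinset ×ˢ l1.toFinset).filter
    (fun p => l1.idxOf p.1 < l1.idxOf p.2 ∧ l2.idxOf p.2 < l2.idxOf p.1)).card

/-- Swap distance between two preference lists: the Kendall tau distance (the
minimum number of adjacent swaps transforming one into the other) if they rank
the same set of agents, and `⊤` otherwise. -/
def listDist {α : Type*} [DecidableEq α] (l1 l2 : List α) : ℕ∞ :=
  if l1.toFinset = l2.toFinset then ((discordant l1 l2 : ℕ) : ℕ∞) else ⊤

/-- Swap distance `τ(P1, P2)` between two profiles: sum over all agents of the
swap distances between their preference lists. -/
def profDist [Fintype U] [Fintype W] (P1 P2 : Profile U W) : ℕ∞ :=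
  (∑ u, listDist (P1.prefU u) (P2.prefU u)) + (∑ w, listDist (P1.prefW w) (P2.prefW w))

/-- `M` is `d`-robust for `P`: stable in every profile at swap distance at most `d`. -/
def Robust [Fintype U] [Fintype W] (P : Profile U W) (d : ℕ) (M : Matching U W) : Prop :=
  ∀ P' : Profile U W, profDist P P' ≤ (d : ℕ∞) → IsStable P' M

/-- `M` is globally `d`-nearly stable for `P`: stable in some profile at swap
distance at most `d`. -/
def GloballyNearlyStable [Fintype U] [Fintype W] (P : Profile U W) (d : ℕ)
    (M : Matching U W) : Prop :=
  ∃ P' : Profile U W, profDist P P' ≤ (d : ℕ∞) ∧ IsStable P' M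

/-- `M` is locally `d`-nearly stable for `P`: stable in some profile in which
each agent's list changed by at most `d` swaps. -/
def LocallyNearlyStable (P : Profile U W) (d : ℕ) (M : Matching U W) : Prop :=
  ∃ P' : Profile U W,
    (∀ u, listDist (P.prefU u) (P'.prefU u) ≤ (d : ℕ∞)) ∧
    (∀ w, listDist (P.prefW w) (P'.prefW w) ≤ (d : ℕ∞)) ∧
    IsStable P' M

/-- Every agent is matched. -/
def IsPerfect (M : Matching U W) : Prop :=
  (∀ u, M.mu u ≠ none) ∧ (∀ w, M.mw w ≠ none)

/-- Egalitarian cost: sum over matched agents of the rank of their partner. -/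
def egalCost [Fintype U] [Fintype W] (P : Profile U W) (M : Matching U W) : ℕ :=
  (∑ u, (M.mu u).elim 0 (fun w => (P.prefU u).idxOf w)) +
  (∑ w, (M.mw w).elim 0 (fun u => (P.prefW w).idxOf u))



section AuxRobust
variable {α : Type*} [DecidableEq α]
variable {α : Type*} [DecidableEq α]

lemma indexOf_filter_lt (p : α → Bool) :
    ∀ (l : List α) (b c : α), b ∈ l.filter p → c ∈ l.filter p →
      l.idxOf b < l.idxOf c → (l.filter p).idxOf b < (l.filter p).idxOf c := by
  intro l
  induction l with
  | nil => simp
  | cons x t ih =>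
    intro b c hb hc hlt
    by_cases hbx : b = x
    · subst hbx
      have hpb : p b = true := (List.mem_filter.1 hb).2
      have hcx : c ≠ b := by
        intro h; subst h; simp at hlt
      rw [List.filter_cons_of_pos hpb, List.idxOf_cons_self,
        List.idxOf_cons_ne _ (fun h => hcx h.symm)]
      exact Nat.succ_pos _
    · have hxb : x ≠ b := fun h => hbx h.symm
      have hb' : b ∈ t.filter p := by
        rcases List.mem_filter.1 hb with ⟨hbm, hpb⟩
        rcases List.mem_cons.1 hbm with h | h
        · exact absurd h hbx
        · exact List.mem_filter.2 ⟨h, hpb⟩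
      have hcx : c ≠ x := by
        rintro rfl
        rw [List.idxOf_cons_self] at hlt
        exact Nat.not_lt_zero _ hlt
      have hxc : x ≠ c := fun h => hcx h.symm
      have hc' : c ∈ t.filter p := by
        rcases List.mem_filter.1 hc with ⟨hcm, hpc⟩
        rcases List.mem_cons.1 hcm with h | h
        · exact absurd h hcx
        · exact List.mem_filter.2 ⟨h, hpc⟩
      rw [List.idxOf_cons_ne _ hxb, List.idxOf_cons_ne _ hxc,
        Nat.succ_lt_succ_iff] at hlt
      have hres := ih b c hb' hc' hlt
      by_cases hpx : p x = true
      · rw [List.filter_cons_of_pos hpx]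
        rw [List.idxOf_cons_ne _ hxb, List.idxOf_cons_ne _ hxc]
        exact Nat.succ_lt_succ hres
      · rw [List.filter_cons_of_neg (by simpa using hpx)]
        exact hres

lemma discordant_self (l : List α) : discordant l l = 0 := by
  unfold discordant
  rw [Finset.card_eq_zero, Finset.filter_eq_empty_iff]
  rintro ⟨a, b⟩ _
  simp only [not_and]
  intro h1 h2
  exact absurd (h1.trans h2) (lt_irrefl _)

lemma listDist_self (l : List α) : listDist l l = 0 := by
  simp [listDist, discordant_self]

lemma toFinset_cons_erase {l : List α} {a : α} (hn : l.Nodup) (ha : a ∈ l) :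
    (a :: l.erase a).toFinset = l.toFinset := by
  ext x
  simp only [List.toFinset_cons, Finset.mem_insert, List.mem_toFinset,
    hn.mem_erase_iff]
  constructor
  · rintro (rfl | ⟨_, h⟩) <;> [exact ha; exact h]
  · intro hx
    by_cases hxa : x = a
    · exact Or.inl hxa
    · exact Or.inr ⟨hxa, hx⟩

lemma discordant_cons_erase {l : List α} {a : α} (hn : l.Nodup) (ha : a ∈ l) :
    discordant l (a :: l.erase a) ≤ l.idxOf a := by
  classical
  set l' := a :: l.erase a with hl'
  have key : ∀ p ∈ ((l.toFinset ×ˢ l.toFinset).filter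
      (fun p => l.idxOf p.1 < l.idxOf p.2 ∧ l'.idxOf p.2 < l'.idxOf p.1)),
      p.2 = a ∧ l.idxOf p.1 < l.idxOf a := by
    rintro ⟨b, c⟩ hp
    rcases Finset.mem_filter.1 hp with ⟨hmem, h1, h2⟩
    rcases Finset.mem_product.1 hmem with ⟨hbm, hcm⟩
    rw [List.mem_toFinset] at hbm hcm
    have hba : b ≠ a := by
      rintro rfl
      rw [List.idxOf_cons_self] at h2
      exact Nat.not_lt_zero _ h2
    by_cases hca : c = a
    · subst hca; exact ⟨rfl, h1⟩
    · exfalso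
      have hef := hn.erase_eq_filter a
      have hb' : b ∈ l.erase a := hn.mem_erase_iff.2 ⟨hba, hbm⟩
      have hc' : c ∈ l.erase a := hn.mem_erase_iff.2 ⟨hca, hcm⟩
      have hmono : (l.erase a).idxOf b < (l.erase a).idxOf c := by
        rw [hef] at hb' hc' ⊢
        exact indexOf_filter_lt _ l b c hb' hc' h1
      rw [hl', List.idxOf_cons_ne _ (fun h => hca h.symm),
        List.idxOf_cons_ne _ (fun h => hba h.symm), Nat.succ_lt_succ_iff] at h2
      exact absurd (hmono.trans h2) (lt_irrefl _)
  unfold discordant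
  refine le_trans (Finset.card_le_card_of_injOn (t := Finset.range (l.idxOf a))
    (fun p => l.idxOf p.1) ?_ ?_) (by simp)
  · intro p hp
    exact Finset.mem_range.2 (key p hp).2
  · intro p hp q hq heq
    have hp2 := key p hp
    have hq2 := key q hq
    have hpm := Finset.mem_product.1 (Finset.mem_filter.1 hp).1
    have hqm := Finset.mem_product.1 (Finset.mem_filter.1 hq).1
    have : p.1 = q.1 := (List.idxOf_inj (List.mem_toFinset.1 hpm.1)
      ).1 heq
    exact Prod.ext this (hp2.1.trans hq2.1.symm)

lemma listDist_cons_erase {l : List α} {a : α} (hn : l.Nodup) (ha : a ∈ l) :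
    listDist l (a :: l.erase a) ≤ (l.idxOf a : ℕ∞) := by
  rw [listDist, if_pos (toFinset_cons_erase hn ha).symm]
  exact_mod_cast Nat.cast_le.2 (discordant_cons_erase hn ha)
end AuxRobust

/-- If `M` is `(n−1)`-robust, then every unmatched mutually acceptable pair
`{u, w}` satisfies `rk_u(w) + rk_w(u) ≥ n`. -/
theorem robust_rank_sum
    {U W : Type} [DecidableEq U] [DecidableEq W] [Fintype U] [Fintype W]
    (n : ℕ) (hU : Fintype.card U = n) (hW : Fintype.card W = n)
    (P : Profile U W) (M : Matching U W) (hrob : Robust P (n - 1) M) :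
    ∀ (u : U) (w : W), w ∈ P.prefU u → u ∈ P.prefW w → M.mu u ≠ some w →
      n ≤ (P.prefU u).idxOf w + (P.prefW w).idxOf u := by
  
  intro u w hwu huw hne
  by_contra hcon
  push_neg at hcon
  have hsum : (P.prefU u).idxOf w + (P.prefW w).idxOf u ≤ n - 1 :=
    Nat.le_sub_one_of_lt hcon
  let P' : Profile U W :=
    { prefU := Function.update P.prefU u (w :: (P.prefU u).erase w)
      prefW := Function.update P.prefW w (u :: (P.prefW w).erase u)
      nodupU := by
        intro u'
        by_cases h : u' = u
        · subst h
          rw [Function.update_self]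
          exact List.nodup_cons.2 ⟨(P.nodupU u').not_mem_erase, (P.nodupU u').erase w⟩
        · rw [Function.update_of_ne h]; exact P.nodupU u'
      nodupW := by
        intro w'
        by_cases h : w' = w
        · subst h
          rw [Function.update_self]
          exact List.nodup_cons.2 ⟨(P.nodupW w').not_mem_erase, (P.nodupW w').erase u⟩
        · rw [Function.update_of_ne h]; exact P.nodupW w' }
  have hPU : P'.prefU u = w :: (P.prefU u).erase w := Function.update_self ..
  have hPW : P'.prefW w = u :: (P.prefW w).erase u := Function.update_self ..
  have hdist : profDist P P' ≤ ((n - 1 : ℕ) : ℕ∞) := by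
    unfold profDist
    have h1 : (∑ u', listDist (P.prefU u') (P'.prefU u')) =
        listDist (P.prefU u) (P'.prefU u) := by
      apply Finset.sum_eq_single_of_mem u (Finset.mem_univ u)
      intro u' _ hneq
      show listDist (P.prefU u') (Function.update P.prefU u (w :: (P.prefU u).erase w) u') = 0
      rw [Function.update_of_ne hneq]
      exact listDist_self _
    have h2 : (∑ w', listDist (P.prefW w') (P'.prefW w')) =
        listDist (P.prefW w) (P'.prefW w) := by
      apply Finset.sum_eq_single_of_mem w (Finset.mem_univ w)
      intro w' _ hneq
      show listDist (P.prefW w') (Function.update P.prefW w (u :: (P.prefW w).erase u) w') = 0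
      rw [Function.update_of_ne hneq]
      exact listDist_self _
    rw [h1, h2, hPU, hPW]
    calc listDist (P.prefU u) (w :: (P.prefU u).erase w)
          + listDist (P.prefW w) (u :: (P.prefW w).erase u)
        ≤ ((P.prefU u).idxOf w : ℕ∞) + ((P.prefW w).idxOf u : ℕ∞) :=
          add_le_add (listDist_cons_erase (P.nodupU u) hwu)
            (listDist_cons_erase (P.nodupW w) huw)
      _ ≤ ((n - 1 : ℕ) : ℕ∞) := by
          rw [← Nat.cast_add]
          exact_mod_cast hsum
  have hstable := hrob P' hdist
  apply hstable.2 u w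
  refine ⟨?_, ?_, hne, ?_, ?_⟩
  · rw [hPU]; exact List.mem_cons_self
  · rw [hPW]; exact List.mem_cons_self
  · intro w' hw'
    have hww : w' ≠ w := by rintro rfl; exact hne hw'
    rw [hPU, List.idxOf_cons_self, List.idxOf_cons_ne _ (fun h => hww h.symm)]
    exact Nat.succ_pos _
  · intro u' hu'
    have huu : u' ≠ u := fun h => hne ((M.consistent u w).2 (h ▸ hu'))
    rw [hPW, List.idxOf_cons_self, List.idxOf_cons_ne _ (fun h => huu h.symm)]
    exact Nat.succ_pos _
end

section
/- Let P1 and P2 be two preference profiles (strict, possibly incomplete preferences, no ties) over the same agent sets with swap distance τ(P1,P2) = 1. Let S1 (resp. S2) be the set of agents left unmatched by every stable matching of P1 (resp. P2). Then the symmetric difference of S1 and S2 has size at most 2. -/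
open Finset

variable {U W : Type} [DecidableEq U] [DecidableEq W]

/-- The set of agents left unmatched by every stable matching of `P`. -/
def UnmatchedSet (P : Profile U W) : Set (U ⊕ W) :=
  {a | ∀ M : Matching U W, IsStable P M →
    Sum.elim (fun u => M.mu u = none) (fun w => M.mw w = none) a}

-- ### Part A : list utilities

/-- order agreement of two lists -/
def Agree {α : Type*} [DecidableEq α] (l1 l2 : List α) : Prop :=
  ∀ a b, a ∈ l1 → b ∈ l1 → (l1.idxOf a < l1.idxOf b ↔ l2.idxOf a < l2.idxOf b)

lemma Agree.refl {α : Type*} [DecidableEq α] (l : List α) : Agree l l :=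
  fun _ _ _ _ => Iff.rfl

lemma Agree.symm {α : Type*} [DecidableEq α] {l1 l2 : List α}
    (hf : l1.toFinset = l2.toFinset) (h : Agree l1 l2) : Agree l2 l1 := by
  intro a b ha hb
  have ha1 : a ∈ l1 := by rw [← List.mem_toFinset, hf, List.mem_toFinset]; exact ha
  have hb1 : b ∈ l1 := by rw [← List.mem_toFinset, hf, List.mem_toFinset]; exact hb
  exact (h a b ha1 hb1).symm

lemma ne_of_indexOf_lt {α : Type*} [DecidableEq α] {l : List α} {a b : α}
    (h : l.idxOf a < l.idxOf b) : a ≠ b := fun hab => by simp [hab] at h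

lemma indexOf_lt_of_le_of_ne {α : Type*} [DecidableEq α] {l : List α} (hn : l.Nodup)
    {a b : α} (ha : a ∈ l) (hb : b ∈ l) (hne : a ≠ b) (h : ¬ l.idxOf b < l.idxOf a) :
    l.idxOf a < l.idxOf b := by
  rcases lt_trichotomy (l.idxOf a) (l.idxOf b) with h1 | h1 | h1
  · exact h1
  · exact absurd ((List.idxOf_inj ha).mp h1) hne
  · exact absurd h1 h

lemma agree_of_discordant_zero {α : Type*} [DecidableEq α] {l1 l2 : List α}
    (hn1 : l1.Nodup) (hn2 : l2.Nodup) (hf : l1.toFinset = l2.toFinset)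
    (hd : discordant l1 l2 = 0) : Agree l1 l2 := by
  have hemp : ∀ a b, a ∈ l1 → b ∈ l1 →
      ¬ (l1.idxOf a < l1.idxOf b ∧ l2.idxOf b < l2.idxOf a) := by
    intro a b ha hb hcon
    have : ((a, b) : α × α) ∈ (l1.toFinset ×ˢ l1.toFinset).filter
        (fun p => l1.idxOf p.1 < l1.idxOf p.2 ∧ l2.idxOf p.2 < l2.idxOf p.1) := by
      simp only [Finset.mem_filter, Finset.mem_product, List.mem_toFinset]
      exact ⟨⟨ha, hb⟩, hcon⟩
    rw [discordant, Finset.card_eq_zero] at hd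
    simp [hd] at this
  intro a b ha hb
  have ha2 : a ∈ l2 := by rw [← List.mem_toFinset, ← hf, List.mem_toFinset]; exact ha
  have hb2 : b ∈ l2 := by rw [← List.mem_toFinset, ← hf, List.mem_toFinset]; exact hb
  constructor
  · intro h
    exact indexOf_lt_of_le_of_ne hn2 ha2 hb2 (ne_of_indexOf_lt h)
      (fun hc => hemp a b ha hb ⟨h, hc⟩)
  · intro h
    have hne : a ≠ b := ne_of_indexOf_lt h
    refine indexOf_lt_of_le_of_ne hn1 ha hb hne (fun hc => ?_)
    exact hemp b a hb ha ⟨hc, h⟩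

/-- sublists of nodup lists preserve strict index order -/
lemma sublist_indexOf_lt {α : Type*} [DecidableEq α] {l l' : List α}
    (hs : List.Sublist l' l) (hn : l.Nodup) : ∀ {a b}, a ∈ l' → b ∈ l' →
      l'.idxOf a < l'.idxOf b → l.idxOf a < l.idxOf b := by
  induction hs with
  | slnil => intro a b ha _ _; simp at ha
  | @cons l₁ l₂ c hs' ih =>
    intro a b ha hb hab
    have hcL : c ∉ l₂ := (List.nodup_cons.mp hn).1
    have hnL : l₂.Nodup := (List.nodup_cons.mp hn).2
    have ha' : a ∈ l₂ := hs'.mem ha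
    have hb' : b ∈ l₂ := hs'.mem hb
    have hac : c ≠ a := fun h => hcL (h ▸ ha')
    have hbc : c ≠ b := fun h => hcL (h ▸ hb')
    rw [List.idxOf_cons_ne _ hac, List.idxOf_cons_ne _ hbc]
    exact Nat.succ_lt_succ (ih hnL ha hb hab)
  | @cons_cons l₁ l₂ c hs' ih =>
    intro a b ha hb hab
    have hcL : c ∉ l₂ := (List.nodup_cons.mp hn).1
    have hnL : l₂.Nodup := (List.nodup_cons.mp hn).2
    by_cases hac : a = c
    · subst hac
      have hbc : b ≠ a := by
        intro h; subst h; exact absurd rfl (ne_of_indexOf_lt hab)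
      rw [List.idxOf_cons_self]
      have hbL : b ∈ l₂ := by
        rcases List.mem_cons.mp hb with h | h
        · exact absurd h hbc
        · exact hs'.mem h
      rw [List.idxOf_cons_ne _ (fun h => hcL (h ▸ hbL) : a ≠ b)]
      exact Nat.succ_pos _
    · by_cases hbc : b = c
      · subst hbc
        rw [List.idxOf_cons_self] at hab
        simp at hab
      · have ha' : a ∈ l₁ := by
          rcases List.mem_cons.mp ha with h | h
          · exact absurd h hac
          · exact h
        have hb' : b ∈ l₁ := by
          rcases List.mem_cons.mp hb with h | h
          · exact absurd h hbc
          · exact h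
        rw [List.idxOf_cons_ne _ (Ne.symm hac), List.idxOf_cons_ne _ (Ne.symm hbc)] at hab ⊢
        exact Nat.succ_lt_succ (ih hnL ha' hb' (Nat.lt_of_succ_lt_succ hab))

-- ### Part C : deterministic alternating chains

/-- one step of the alternating chain: from a `U`-agent follow `Mb`, from a
`W`-agent follow `Ma`. -/
def stp (Ma Mb : Matching U W) : U ⊕ W → Option (U ⊕ W)
  | Sum.inl u => (Mb.mu u).map Sum.inr
  | Sum.inr w => (Ma.mw w).map Sum.inl

/-- iterate a partial function -/
def itOpt {α : Type*} (f : α → Option α) (z : α) : ℕ → Option α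
  | 0 => some z
  | n + 1 => (itOpt f z n).bind f

lemma stp_eq_inl {Ma Mb : Matching U W} {a : U ⊕ W} {u : U} :
    stp Ma Mb a = some (Sum.inl u) ↔ ∃ w, a = Sum.inr w ∧ Ma.mw w = some u := by
  cases a with
  | inl u' => simp [stp]
  | inr w' => simp [stp]

lemma stp_eq_inr {Ma Mb : Matching U W} {a : U ⊕ W} {w : W} :
    stp Ma Mb a = some (Sum.inr w) ↔ ∃ u, a = Sum.inl u ∧ Mb.mu u = some w := by
  cases a with
  | inl u' => simp [stp]
  | inr w' => simp [stp]

lemma stp_inj {Ma Mb : Matching U W} {a b c : U ⊕ W}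
    (ha : stp Ma Mb a = some c) (hb : stp Ma Mb b = some c) : a = b := by
  cases c with
  | inl u =>
    obtain ⟨w1, rfl, h1⟩ := stp_eq_inl.mp ha
    obtain ⟨w2, rfl, h2⟩ := stp_eq_inl.mp hb
    have e1 : Ma.mu u = some w1 := (Ma.consistent u w1).mpr h1
    have e2 : Ma.mu u = some w2 := (Ma.consistent u w2).mpr h2
    rw [e1] at e2; exact congrArg Sum.inr (Option.some_inj.mp e2)
  | inr w =>
    obtain ⟨u1, rfl, h1⟩ := stp_eq_inr.mp ha
    obtain ⟨u2, rfl, h2⟩ := stp_eq_inr.mp hb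
    have e1 : Mb.mw w = some u1 := (Mb.consistent u1 w).mp h1
    have e2 : Mb.mw w = some u2 := (Mb.consistent u2 w).mp h2
    rw [e1] at e2; exact congrArg Sum.inl (Option.some_inj.mp e2)

/-- walking back along deterministic injective chains -/
lemma itOpt_backtrack {α : Type*} {f : α → Option α}
    (hf : ∀ a b c, f a = some c → f b = some c → a = b) :
    ∀ {n m : ℕ} {z1 z2 v : α}, n ≤ m → itOpt f z1 n = some v → itOpt f z2 m = some v →
      itOpt f z2 (m - n) = some z1 := by
  intro n
  induction n with
  | zero =>
    intro m z1 z2 v _ h1 h2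
    simp [itOpt] at h1
    subst h1; simpa using h2
  | succ n ih =>
    intro m z1 z2 v hnm h1 h2
    cases m with
    | zero => omega
    | succ m' =>
      simp only [itOpt] at h1 h2
      obtain ⟨a, ha, ha'⟩ := Option.bind_eq_some_iff.mp h1
      obtain ⟨b, hb, hb'⟩ := Option.bind_eq_some_iff.mp h2
      have hab : a = b := hf a b v ha' hb'
      subst hab
      have := ih (Nat.le_of_succ_le_succ hnm) ha hb
      simpa [Nat.succ_sub_succ] using this

/-- agents appearing at a positive position of a chain are matched -/
lemma itOpt_pos_matched_inl {Ma Mb : Matching U W} {z : U ⊕ W} {k : ℕ} {u : U}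
    (hk : 0 < k) (h : itOpt (stp Ma Mb) z k = some (Sum.inl u)) : Ma.mu u ≠ none := by
  cases k with
  | zero => omega
  | succ k' =>
    simp only [itOpt] at h
    obtain ⟨a, _, ha'⟩ := Option.bind_eq_some_iff.mp h
    obtain ⟨w, rfl, hw⟩ := stp_eq_inl.mp ha'
    rw [(Ma.consistent u w).mpr hw]; simp

lemma itOpt_pos_matched_inr {Ma Mb : Matching U W} {z : U ⊕ W} {k : ℕ} {w : W}
    (hk : 0 < k) (h : itOpt (stp Ma Mb) z k = some (Sum.inr w)) : Mb.mw w ≠ none := by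
  cases k with
  | zero => omega
  | succ k' =>
    simp only [itOpt] at h
    obtain ⟨a, _, ha'⟩ := Option.bind_eq_some_iff.mp h
    obtain ⟨u, rfl, hu⟩ := stp_eq_inr.mp ha'
    rw [(Mb.consistent u w).mp hu]; simp

/-- a "start" of a chain for `stp Ma Mb` -/
def ChainStart (Ma Mb : Matching U W) : U ⊕ W → Prop
  | Sum.inl u => Ma.mu u = none
  | Sum.inr w => Mb.mw w = none

/-- two chain starts reaching a common agent are equal -/
lemma chainStart_unique {Ma Mb : Matching U W} {z z' v : U ⊕ W} {n m : ℕ}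
    (hz : ChainStart Ma Mb z) (hz' : ChainStart Ma Mb z')
    (h1 : itOpt (stp Ma Mb) z n = some v) (h2 : itOpt (stp Ma Mb) z' m = some v) :
    z = z' := by
  have key : ∀ {a b : U ⊕ W} {p q : ℕ}, p ≤ q → ChainStart Ma Mb a →
      itOpt (stp Ma Mb) a p = some v → itOpt (stp Ma Mb) b q = some v →
      a = b ∨ False ∨ (q - p > 0 ∧ itOpt (stp Ma Mb) b (q - p) = some a) := by
    intro a b p q hpq hsa hA hB
    have hbt := itOpt_backtrack (fun a b c => stp_inj) hpq hA hB
    rcases Nat.eq_zero_or_pos (q - p) with h0 | h0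
    · left; rw [h0] at hbt; simp [itOpt] at hbt; exact hbt.symm
    · right; right; exact ⟨h0, hbt⟩
  rcases le_total n m with hnm | hnm
  · rcases key hnm hz h1 h2 with h | h | ⟨hpos, hit⟩
    · exact h
    · exact h.elim
    · exfalso
      cases z with
      | inl u => exact itOpt_pos_matched_inl hpos hit hz
      | inr w => exact itOpt_pos_matched_inr hpos hit hz
  · rcases key hnm hz' h2 h1 with h | h | ⟨hpos, hit⟩
    · exact h.symm
    · exact h.elim
    · exfalso
      cases z' with
      | inl u => exact itOpt_pos_matched_inl hpos hit hz'
      | inr w => exact itOpt_pos_matched_inr hpos hit hz'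

-- ### Part D : the chain lemma

lemma mem_of_tf {α : Type*} [DecidableEq α] {l1 l2 : List α} (h : l1.toFinset = l2.toFinset)
    {a : α} (ha : a ∈ l1) : a ∈ l2 := by
  rw [← List.mem_toFinset, ← h, List.mem_toFinset]; exact ha

/-- The fundamental chain lemma: if `M1` is stable for `P1`, `M2` is stable for
`P2`, the profiles agree except possibly on "exceptional" agents, and `u0` is
unmatched in `M1` but matched in `M2`, then the alternating chain starting at
`u0` reaches an exceptional agent. -/
lemma chain_lemma_U [Fintype U] [Fintype W]
    {P1 P2 : Profile U W} {M1 M2 : Matching U W}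
    (hM1 : IsStable P1 M1) (hM2 : IsStable P2 M2)
    (hFU : ∀ u, (P1.prefU u).toFinset = (P2.prefU u).toFinset)
    (hFW : ∀ w, (P1.prefW w).toFinset = (P2.prefW w).toFinset)
    (EU : U → Prop) (EW : W → Prop)
    (hAU : ∀ u, ¬ EU u → Agree (P1.prefU u) (P2.prefU u))
    (hAW : ∀ w, ¬ EW w → Agree (P1.prefW w) (P2.prefW w))
    (u0 : U) (h1 : M1.mu u0 = none) (h2 : M2.mu u0 ≠ none) :
    ∃ n v, itOpt (stp M1 M2) (Sum.inl u0) n = some v ∧ Sum.elim EU EW v := by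
  by_contra hcon
  push_neg at hcon
  -- `Q i` : state of the chain after `i` full rounds
  set f := stp M1 M2 with hf
  set Q : ℕ → Prop := fun i => ∃ w u u',
    itOpt f (Sum.inl u0) (2*i+1) = some (Sum.inr w) ∧
    itOpt f (Sum.inl u0) (2*i+2) = some (Sum.inl u) ∧
    M2.mw w = some u' ∧ M1.mw w = some u ∧
    (P1.prefW w).idxOf u < (P1.prefW w).idxOf u' with hQ
  -- base case
  have hQ0 : Q 0 := by
    obtain ⟨w1, hw1⟩ := Option.ne_none_iff_exists'.mp h2
    have it1 : itOpt f (Sum.inl u0) 1 = some (Sum.inr w1) := by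
      simp [itOpt, hf, stp, hw1]
    have hIR2 := hM2.1 u0 w1 hw1
    have hwP1 : w1 ∈ P1.prefU u0 := mem_of_tf (hFU u0).symm hIR2.1
    have huP1 : u0 ∈ P1.prefW w1 := mem_of_tf (hFW w1).symm hIR2.2
    have hnb := hM1.2 u0 w1
    rw [IsBlocking] at hnb
    push_neg at hnb
    have hE := hnb hwP1 huP1 (by rw [h1]; simp)
      (fun w' hww' => by rw [h1] at hww'; exact absurd hww' (by simp))
    obtain ⟨u1, hmw1, hle⟩ := hE
    have hu1ne : u1 ≠ u0 := by
      intro h; rw [h] at hmw1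
      exact absurd ((M1.consistent u0 w1).mpr hmw1) (by rw [h1]; simp)
    have hu1P1 : u1 ∈ P1.prefW w1 := (hM1.1 u1 w1 ((M1.consistent u1 w1).mpr hmw1)).2
    have hlt : (P1.prefW w1).idxOf u1 < (P1.prefW w1).idxOf u0 :=
      indexOf_lt_of_le_of_ne (P1.nodupW w1) hu1P1 huP1 hu1ne (not_lt.mpr hle)
    have it2 : itOpt f (Sum.inl u0) 2 = some (Sum.inl u1) := by
      have : itOpt f (Sum.inl u0) 2 = (itOpt f (Sum.inl u0) 1).bind f := rfl
      rw [this, it1]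
      simp [hf, stp, hmw1]
    exact ⟨w1, u1, u0, it1, it2, (M2.consistent u0 w1).mp hw1, hmw1, hlt⟩
  -- inductive step
  have hstep : ∀ i, Q i → Q (i+1) := by
    intro i hqi
    obtain ⟨w, u, u', hitw, hitu, hmw2, hmw1, hlt1⟩ := hqi
    have hEw : ¬ EW w := fun h => hcon (2*i+1) (Sum.inr w) hitw h
    have hEu : ¬ EU u := fun h => hcon (2*i+2) (Sum.inl u) hitu h
    have hmu1 : M1.mu u = some w := (M1.consistent u w).mpr hmw1
    have hmu2' : M2.mu u' = some w := (M2.consistent u' w).mpr hmw2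
    have hu_1 : u ∈ P1.prefW w := (hM1.1 u w hmu1).2
    have hw_u1 : w ∈ P1.prefU u := (hM1.1 u w hmu1).1
    have hu'_2 : u' ∈ P2.prefW w := (hM2.1 u' w hmu2').2
    have hu'_1 : u' ∈ P1.prefW w := mem_of_tf (hFW w).symm hu'_2
    have hu_2 : u ∈ P2.prefW w := mem_of_tf (hFW w) hu_1
    have hw_u2 : w ∈ P2.prefU u := mem_of_tf (hFU u) hw_u1
    have huu' : u ≠ u' := ne_of_indexOf_lt hlt1
    -- (1) transfer the W-side comparison to P2
    have hlt2 : (P2.prefW w).idxOf u < (P2.prefW w).idxOf u' :=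
      (hAW w hEw u u' hu_1 hu'_1).mp hlt1
    -- (2) (u, w) does not block M2 in P2
    have hC2 : M2.mu u ≠ some w := by
      intro h
      exact huu' (Option.some_inj.mp (hmw2.symm.trans ((M2.consistent u w).mp h))).symm
    have hnb2 := hM2.2 u w
    rw [IsBlocking] at hnb2
    push_neg at hnb2
    have hD2 := hnb2 hw_u2 hu_2 hC2
    -- the W-side condition holds, so the U-side condition must fail
    obtain ⟨w', hmu2, hnlt⟩ : ∃ w', M2.mu u = some w' ∧
        ¬ (P2.prefU u).idxOf w < (P2.prefU u).idxOf w' := by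
      by_contra hno
      push_neg at hno
      obtain ⟨u'', hu''⟩ := hD2 hno
      rw [hmw2] at hu''
      have : u'' = u' := Option.some_inj.mp hu''.1.symm
      subst this
      exact absurd hlt2 (by omega)
    have hw'w : w' ≠ w := fun h => hC2 (h ▸ hmu2)
    have hw'_2 : w' ∈ P2.prefU u := (hM2.1 u w' hmu2).1
    have hw'_1 : w' ∈ P1.prefU u := mem_of_tf (hFU u).symm hw'_2
    have strict2 : (P2.prefU u).idxOf w' < (P2.prefU u).idxOf w :=
      indexOf_lt_of_le_of_ne (P2.nodupU u) hw'_2 hw_u2 hw'w hnlt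
    -- (3) transfer the U-side comparison to P1
    have strict1 : (P1.prefU u).idxOf w' < (P1.prefU u).idxOf w :=
      (hAU u hEu w' w hw'_1 hw_u1).mpr strict2
    -- (4) (u, w') does not block M1 in P1
    have hB1 : u ∈ P1.prefW w' := by
      have : u ∈ P2.prefW w' := (hM2.1 u w' hmu2).2
      exact mem_of_tf (hFW w').symm this
    have hC1 : M1.mu u ≠ some w' := by rw [hmu1]; simp [Ne.symm hw'w]
    have hnb1 := hM1.2 u w'
    rw [IsBlocking] at hnb1
    push_neg at hnb1
    have hE1 := hnb1 hw'_1 hB1 hC1 (fun w'' hw'' => by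
      rw [hmu1] at hw''
      rw [← Option.some_inj.mp hw'']
      exact strict1)
    obtain ⟨up, hmw1', hle'⟩ := hE1
    have hupne : up ≠ u := by
      intro h; subst h
      exact hw'w (Option.some_inj.mp (hmu1.symm.trans ((M1.consistent up w').mpr hmw1'))).symm
    have hup1 : up ∈ P1.prefW w' := (hM1.1 up w' ((M1.consistent up w').mpr hmw1')).2
    have hltnew : (P1.prefW w').idxOf up < (P1.prefW w').idxOf u :=
      indexOf_lt_of_le_of_ne (P1.nodupW w') hup1 hB1 hupne (not_lt.mpr hle')
    have hit3 : itOpt f (Sum.inl u0) (2*(i+1)+1) = some (Sum.inr w') := by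
      have e : 2*(i+1)+1 = (2*i+2)+1 := by ring
      rw [e]
      have : itOpt f (Sum.inl u0) ((2*i+2)+1) = (itOpt f (Sum.inl u0) (2*i+2)).bind f := rfl
      rw [this, hitu]
      simp [hf, stp, hmu2]
    have hit4 : itOpt f (Sum.inl u0) (2*(i+1)+2) = some (Sum.inl up) := by
      have e : 2*(i+1)+2 = (2*(i+1)+1)+1 := by ring
      rw [e]
      have : itOpt f (Sum.inl u0) ((2*(i+1)+1)+1) = (itOpt f (Sum.inl u0) (2*(i+1)+1)).bind f := rfl
      rw [this, hit3]
      simp [hf, stp, hmw1']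
    exact ⟨w', up, u, hit3, hit4, (M2.consistent u w').mp hmu2, hmw1', hltnew⟩
  have hQall : ∀ i, Q i := fun i => Nat.rec hQ0 (fun j ih => hstep j ih) i
  -- extract an injection `Fin (card W + 1) ↪ W`, contradiction
  have hinj : Function.Injective (fun i : Fin (Fintype.card W + 1) => (hQall i).choose) := by
    intro i j hij
    by_contra hne
    have hi := (hQall i).choose_spec
    have hj := (hQall j).choose_spec
    obtain ⟨u_i, u'_i, hitwi, _⟩ := hi
    obtain ⟨u_j, u'_j, hitwj, _⟩ := hj
    have hij' : (hQall i).choose = (hQall j).choose := hij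
    rw [hij'] at hitwi
    -- two distinct positions with the same value
    have hne' : (2*(i:ℕ)+1) ≠ (2*(j:ℕ)+1) := by
      intro h
      apply hne
      apply Fin.ext
      omega
    rcases Nat.lt_or_ge (2*(i:ℕ)+1) (2*(j:ℕ)+1) with hlt | hge
    · have hbt := itOpt_backtrack (fun a b c ha hb => stp_inj ha hb) (le_of_lt hlt) hitwi hitwj
      have hpos : 0 < (2*(j:ℕ)+1) - (2*(i:ℕ)+1) := by omega
      exact itOpt_pos_matched_inl hpos hbt h1
    · have hlt' : (2*(j:ℕ)+1) < (2*(i:ℕ)+1) := by omega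
      have hbt := itOpt_backtrack (fun a b c ha hb => stp_inj ha hb) (le_of_lt hlt') hitwj hitwi
      have hpos : 0 < (2*(i:ℕ)+1) - (2*(j:ℕ)+1) := by omega
      exact itOpt_pos_matched_inl hpos hbt h1
  have := Fintype.card_le_of_injective _ hinj
  rw [Fintype.card_fin] at this
  omega

-- ### flipped structures

def Profile.flip (P : Profile U W) : Profile W U :=
  ⟨P.prefW, P.prefU, P.nodupW, P.nodupU⟩

def Matching.flip (M : Matching U W) : Matching W U :=
  ⟨M.mw, M.mu, fun w u => ((M.consistent u w).symm)⟩

lemma IsStable.flip {P : Profile U W} {M : Matching U W} (h : IsStable P M) :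
    IsStable P.flip M.flip := by
  constructor
  · intro w u hwu
    have := h.1 u w ((M.consistent u w).mpr hwu)
    exact ⟨this.2, this.1⟩
  · rintro w u ⟨hA, hB, hC, hD, hE⟩
    refine h.2 u w ⟨hB, hA, ?_, hE, hD⟩
    intro hcon
    exact hC ((M.consistent u w).mp hcon)

lemma stp_flip (M1 M2 : Matching U W) (z : U ⊕ W) :
    stp M1.flip M2.flip z.swap = (stp M2 M1 z).map Sum.swap := by
  cases z with
  | inl u =>
    simp only [Sum.swap_inl, stp, Profile.flip, Matching.flip]
    cases M1.mu u <;> simp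
  | inr w =>
    simp only [Sum.swap_inr, stp, Profile.flip, Matching.flip]
    cases M2.mw w <;> simp

lemma itOpt_flip (M1 M2 : Matching U W) (z : U ⊕ W) (n : ℕ) :
    itOpt (stp M1.flip M2.flip) z.swap n = (itOpt (stp M2 M1) z n).map Sum.swap := by
  induction n with
  | zero => simp [itOpt]
  | succ n ih =>
    simp only [itOpt, ih]
    cases h : itOpt (stp M2 M1) z n with
    | none => simp
    | some a => simp [stp_flip]

/-- chain lemma, for a `W`-agent unmatched in `M1` but matched in `M2`;
the chain uses `stp M2 M1`. -/
lemma chain_lemma_W [Fintype U] [Fintype W]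
    {P1 P2 : Profile U W} {M1 M2 : Matching U W}
    (hM1 : IsStable P1 M1) (hM2 : IsStable P2 M2)
    (hFU : ∀ u, (P1.prefU u).toFinset = (P2.prefU u).toFinset)
    (hFW : ∀ w, (P1.prefW w).toFinset = (P2.prefW w).toFinset)
    (EU : U → Prop) (EW : W → Prop)
    (hAU : ∀ u, ¬ EU u → Agree (P1.prefU u) (P2.prefU u))
    (hAW : ∀ w, ¬ EW w → Agree (P1.prefW w) (P2.prefW w))
    (w0 : W) (h1 : M1.mw w0 = none) (h2 : M2.mw w0 ≠ none) :
    ∃ n v, itOpt (stp M2 M1) (Sum.inr w0) n = some v ∧ Sum.elim EU EW v := by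
  obtain ⟨n, v, hit, hexc⟩ := chain_lemma_U (U := W) (W := U)
    hM1.flip hM2.flip hFW hFU EW EU hAW hAU w0 h1 h2
  have heq := itOpt_flip M1 M2 (Sum.inr w0) n
  simp only [Sum.swap_inr] at heq
  rw [heq] at hit
  obtain ⟨v', hv', hsw⟩ := Option.map_eq_some_iff.mp hit
  refine ⟨n, v', hv', ?_⟩
  cases v' with
  | inl u => rw [← hsw] at hexc; simpa using hexc
  | inr w => rw [← hsw] at hexc; simpa using hexc

-- ### Part E : existence of stable matchings (Gale–Shapley)

lemma head?_mem {α : Type*} {l : List α} {a : α} (h : l.head? = some a) : a ∈ l :=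
  List.mem_of_mem_head? (by simp [h])

lemma head?_erase_ne {α : Type*} [DecidableEq α] {l : List α} {a b : α}
    (h : l.head? = some a) (hne : a ≠ b) : (l.erase b).head? = some a := by
  cases l with
  | nil => simp at h
  | cons c t =>
    simp only [List.head?_cons, Option.some_inj] at h
    subst h
    rw [List.erase_cons_tail (by simp [hne])]
    rfl

/-- index of the head of a nodup sublist is minimal in the big list -/
lemma head_indexOf_le {α : Type*} [DecidableEq α] {l l' : List α} (hs : List.Sublist l' l)
    (hn : l.Nodup) {a b : α} (hh : l'.head? = some a) (hb : b ∈ l') :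
    l.idxOf a ≤ l.idxOf b := by
  by_cases hab : a = b
  · subst hab; exact le_rfl
  · apply le_of_lt
    apply sublist_indexOf_lt hs hn (head?_mem hh) hb
    cases l' with
    | nil => simp at hh
    | cons c t =>
      simp only [List.head?_cons, Option.some_inj] at hh
      subst hh
      rw [List.idxOf_cons_self]
      rcases List.mem_cons.mp hb with h | h
      · exact absurd h.symm hab
      · rw [List.idxOf_cons_ne _ hab]
        exact Nat.succ_pos _

/-- invariant of the deletion-based Gale–Shapley procedure -/
def gsInv (P Q : Profile U W) : Prop :=
  (∀ u, List.Sublist (Q.prefU u) (P.prefU u)) ∧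
  (∀ w, List.Sublist (Q.prefW w) (P.prefW w)) ∧
  (∀ u w, w ∈ P.prefU u → u ∈ P.prefW w → (w ∈ Q.prefU u ↔ u ∈ Q.prefW w)) ∧
  (∀ u w, w ∈ P.prefU u → u ∈ P.prefW w → w ∉ Q.prefU u →
    ∃ us, us ∈ Q.prefW w ∧ (Q.prefU us).head? = some w ∧
      (P.prefW w).idxOf us < (P.prefW w).idxOf u)

def gsTotal [Fintype U] [Fintype W] (Q : Profile U W) : ℕ :=
  (∑ u, (Q.prefU u).length) + (∑ w, (Q.prefW w).length)

/-- the final state yields a stable matching -/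
lemma gs_final (P Q : Profile U W) (hInv : gsInv P Q)
    (hcl : ∀ u w, w ∈ Q.prefU u → u ∈ Q.prefW w)
    (hnp : ∀ u w u', (Q.prefU u).head? = some w → u' ∈ Q.prefW w →
      (P.prefW w).idxOf u' ≤ (P.prefW w).idxOf u) :
    ∃ M, IsStable P M := by
  classical
  obtain ⟨hsubU, hsubW, hmut, hjust⟩ := hInv
  have uniq : ∀ u1 u2 w, (Q.prefU u1).head? = some w → (Q.prefU u2).head? = some w →
      u1 = u2 := by
    intro u1 u2 w hh1 hh2
    have hm1 : u1 ∈ Q.prefW w := hcl u1 w (head?_mem hh1)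
    have hm2 : u2 ∈ Q.prefW w := hcl u2 w (head?_mem hh2)
    have h12 : (P.prefW w).idxOf u2 ≤ (P.prefW w).idxOf u1 := hnp u1 w u2 hh1 hm2
    have h21 : (P.prefW w).idxOf u1 ≤ (P.prefW w).idxOf u2 := hnp u2 w u1 hh2 hm1
    exact (List.idxOf_inj ((hsubW w).mem hm1)).mp (le_antisymm h21 h12)
  refine ⟨⟨fun u => (Q.prefU u).head?,
    fun w => if h : ∃ u, (Q.prefU u).head? = some w then some h.choose else none, ?_⟩, ?_, ?_⟩
  · intro u w
    constructor
    · intro h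
      rw [dif_pos ⟨u, h⟩]
      exact congrArg some (uniq _ _ w (⟨u, h⟩ : ∃ u, (Q.prefU u).head? = some w).choose_spec h)
    · intro h
      by_cases hex : ∃ u, (Q.prefU u).head? = some w
      · rw [dif_pos hex] at h
        rw [← Option.some_inj.mp h]
        exact hex.choose_spec
      · rw [dif_neg hex] at h
        simp at h
  · -- individual rationality
    intro u w h
    simp only at h
    have hw : w ∈ Q.prefU u := head?_mem h
    exact ⟨(hsubU u).mem hw, (hsubW w).mem (hcl u w hw)⟩
  · -- no blocking pair
    rintro u w ⟨hA, hB, hC, hD, hE⟩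
    simp only at hC hD hE
    by_cases hw : w ∈ Q.prefU u
    · have hne : Q.prefU u ≠ [] := fun h => by simp [h] at hw
      obtain ⟨w0, hw0⟩ : ∃ w0, (Q.prefU u).head? = some w0 := by
        cases hh : (Q.prefU u).head? with
        | none => exact absurd (List.head?_eq_none_iff.mp hh) hne
        | some x => exact ⟨x, rfl⟩
      have hlt := hD w0 hw0
      have hle := head_indexOf_le (hsubU u) (P.nodupU u) hw0 hw
      omega
    · obtain ⟨us, husm, hushead, husidx⟩ := hjust u w hA hB hw
      have hmw : (if h : ∃ u, (Q.prefU u).head? = some w then some h.choose else none)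
          = some us := by
        rw [dif_pos ⟨us, hushead⟩]
        exact congrArg some (uniq _ _ w
          (⟨us, hushead⟩ : ∃ u, (Q.prefU u).head? = some w).choose_spec hushead)
      have := hE us hmw
      omega

/-- cleanup step: delete a non-mutual pair -/
lemma gs_cleanup [Fintype U] [Fintype W] (P Q : Profile U W) (hInv : gsInv P Q)
    {u : U} {w : W} (hw : w ∈ Q.prefU u) (hu : u ∉ Q.prefW w) :
    ∃ Q', gsInv P Q' ∧ gsTotal Q' < gsTotal Q := by
  classical
  obtain ⟨hsubU, hsubW, hmut, hjust⟩ := hInv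
  have hPu : u ∉ P.prefW w := by
    intro hP
    exact hu ((hmut u w ((hsubU u).mem hw) hP).mp hw)
  refine ⟨⟨fun x => if x = u then (Q.prefU u).erase w else Q.prefU x, Q.prefW,
    fun x => by split <;> [exact (Q.nodupU u).erase w; exact Q.nodupU x],
    Q.nodupW⟩, ⟨?_, hsubW, ?_, ?_⟩, ?_⟩
  · intro x
    dsimp only
    split
    · next h => subst h; exact (List.erase_sublist (a := w) (l := Q.prefU x)).trans (hsubU x)
    · exact hsubU x
  · intro u₂ w₂ hP1 hP2
    dsimp only
    split
    · next h =>
      subst h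
      have hw₂w : w₂ ≠ w := fun hh => by subst hh; exact hPu hP2
      rw [(Q.nodupU u₂).mem_erase_iff]
      simp only [hw₂w, ne_eq, not_false_iff, true_and]
      exact hmut u₂ w₂ hP1 hP2
    · exact hmut u₂ w₂ hP1 hP2
  · intro u₂ w₂ hP1 hP2 hnm
    dsimp only at hnm
    have hold : w₂ ∉ Q.prefU u₂ := by
      by_cases h : u₂ = u
      · subst h
        rw [if_pos rfl] at hnm
        intro hmem
        by_cases hww : w₂ = w
        · subst hww; exact hPu hP2
        · exact hnm ((Q.nodupU u₂).mem_erase_iff.mpr ⟨hww, hmem⟩)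
      · rw [if_neg h] at hnm; exact hnm
    obtain ⟨us, husm, hushead, husidx⟩ := hjust u₂ w₂ hP1 hP2 hold
    refine ⟨us, husm, ?_, husidx⟩
    dsimp only
    split
    · next h =>
      subst h
      have hw₂w : w₂ ≠ w := by
        intro hh; subst hh
        exact hu husm
      exact head?_erase_ne hushead hw₂w
    · exact hushead
  · -- total decreases
    unfold gsTotal
    dsimp only
    have h1 : ∑ x, ((fun x => if x = u then (Q.prefU u).erase w else Q.prefU x) x).length
        < ∑ x, (Q.prefU x).length := by
      apply Finset.sum_lt_sum
      · intro i _
        dsimp only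
        split
        · next h => subst h; exact (List.erase_sublist (a := w)).length_le
        · exact le_rfl
      · refine ⟨u, Finset.mem_univ u, ?_⟩
        dsimp only
        rw [if_pos rfl]
        have := List.length_erase_of_mem hw
        have hpos : 0 < (Q.prefU u).length := List.length_pos_iff.mpr (fun h => by simp [h] at hw)
        omega
    dsimp only at h1
    omega

/-- proposal step: `u`'s current favourite `w` cuts her list below `u` -/
lemma gs_propose [Fintype U] [Fintype W] (P Q : Profile U W) (hInv : gsInv P Q)
    (hcl : ∀ u w, w ∈ Q.prefU u → u ∈ Q.prefW w)
    {u u' : U} {w : W} (hhead : (Q.prefU u).head? = some w) (hu' : u' ∈ Q.prefW w)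
    (hlt : (P.prefW w).idxOf u < (P.prefW w).idxOf u') :
    ∃ Q', gsInv P Q' ∧ gsTotal Q' < gsTotal Q := by
  classical
  obtain ⟨hsubU, hsubW, hmut, hjust⟩ := hInv
  have hu_in : u ∈ Q.prefW w := hcl u w (head?_mem hhead)
  set C : U → Prop := fun x => x ∈ Q.prefW w ∧ (P.prefW w).idxOf u < (P.prefW w).idxOf x
    with hC
  have hCu : ¬ C u := fun h => by omega
  set newW : List U := (Q.prefW w).filter
    (fun y => (P.prefW w).idxOf y ≤ (P.prefW w).idxOf u) with hnewW
  have hmemW : ∀ x, x ∈ newW ↔ x ∈ Q.prefW w ∧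
      (P.prefW w).idxOf x ≤ (P.prefW w).idxOf u := by
    intro x; rw [hnewW, List.mem_filter]; simp
  refine ⟨⟨fun x => if C x then (Q.prefU x).erase w else Q.prefU x,
    fun y => if y = w then newW else Q.prefW y,
    fun x => by split <;> [exact (Q.nodupU x).erase w; exact Q.nodupU x],
    fun y => by split <;> [exact (Q.nodupW w).filter _; exact Q.nodupW y]⟩,
    ⟨?_, ?_, ?_, ?_⟩, ?_⟩
  · intro x
    dsimp only
    split
    · exact (List.erase_sublist (a := w) (l := Q.prefU x)).trans (hsubU x)
    · exact hsubU x
  · intro y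
    dsimp only
    split
    · next h => subst h; exact (List.filter_sublist (l := Q.prefW y)).trans (hsubW y)
    · exact hsubW y
  · -- mutuality
    intro u₂ w₂ hP1 hP2
    dsimp only
    by_cases hww : w₂ = w
    · subst hww
      rw [if_pos rfl, hmemW u₂]
      by_cases hc : C u₂
      · rw [if_pos hc]
        constructor
        · intro hmem; exact absurd hmem (Q.nodupU u₂).not_mem_erase
        · rintro ⟨_, hle⟩; exact absurd hle (by have := hc.2; omega)
      · rw [if_neg hc]
        rw [hmut u₂ w₂ hP1 hP2]
        constructor
        · intro hm
          refine ⟨hm, ?_⟩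
          by_contra hgt
          exact hc ⟨hm, by omega⟩
        · rintro ⟨hm, _⟩; exact hm
    · rw [if_neg hww]
      by_cases hc : C u₂
      · rw [if_pos hc, (Q.nodupU u₂).mem_erase_iff]
        simp only [hww, ne_eq, not_false_iff, true_and]
        exact hmut u₂ w₂ hP1 hP2
      · rw [if_neg hc]; exact hmut u₂ w₂ hP1 hP2
  · -- justification
    intro u₂ w₂ hP1 hP2 hnm
    dsimp only at hnm ⊢
    have hwitu : ¬ C u := hCu
    by_cases hold : w₂ ∈ Q.prefU u₂
    · -- newly deleted: u₂ ∈ C and w₂ = w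
      have hc : C u₂ := by
        by_contra hc
        rw [if_neg hc] at hnm
        exact hnm hold
      rw [if_pos hc] at hnm
      have hww : w₂ = w := by
        by_contra hww
        exact hnm ((Q.nodupU u₂).mem_erase_iff.mpr ⟨hww, hold⟩)
      subst hww
      refine ⟨u, ?_, ?_, hc.2⟩
      · rw [if_pos rfl, hmemW]; exact ⟨hu_in, le_rfl⟩
      · rw [if_neg hwitu]; exact hhead
    · obtain ⟨us, husm, hushead, husidx⟩ := hjust u₂ w₂ hP1 hP2 hold
      by_cases hww : w₂ = w
      · subst hww
        by_cases hcase : (P.prefW w₂).idxOf us ≤ (P.prefW w₂).idxOf u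
        · refine ⟨us, ?_, ?_, husidx⟩
          · rw [if_pos rfl, hmemW]; exact ⟨husm, hcase⟩
          · have hcus : ¬ C us := fun hcc => by have := hcc.2; omega
            rw [if_neg hcus]; exact hushead
        · refine ⟨u, ?_, ?_, by omega⟩
          · rw [if_pos rfl, hmemW]; exact ⟨hu_in, le_rfl⟩
          · rw [if_neg hwitu]; exact hhead
      · refine ⟨us, ?_, ?_, husidx⟩
        · rw [if_neg hww]; exact husm
        · by_cases hcus : C us
          · rw [if_pos hcus]
            exact head?_erase_ne hushead hww
          · rw [if_neg hcus]; exact hushead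
  · -- total decreases
    unfold gsTotal
    dsimp only
    have h1 : ∑ y : W, (if y = w then newW else Q.prefW y).length
        < ∑ y : W, (Q.prefW y).length := by
      apply Finset.sum_lt_sum
      · intro i _
        split
        · next h => subst h; exact (List.filter_sublist (l := Q.prefW i)).length_le
        · exact le_rfl
      · refine ⟨w, Finset.mem_univ w, ?_⟩
        rw [if_pos rfl]
        have hsub : List.Sublist newW (Q.prefW w) := List.filter_sublist
        have hlen : newW.length ≤ (Q.prefW w).length := hsub.length_le
        rcases Nat.lt_or_ge newW.length (Q.prefW w).length with h | h
        · exact h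
        · exfalso
          have : newW = Q.prefW w := hsub.eq_of_length (le_antisymm hlen h)
          have : u' ∈ newW := this ▸ hu'
          rw [hmemW] at this
          omega
    have h2 : ∑ x : U, (if C x then (Q.prefU x).erase w else Q.prefU x).length
        ≤ ∑ x : U, (Q.prefU x).length := by
      apply Finset.sum_le_sum
      intro i _
      split
      · exact (List.erase_sublist (a := w)).length_le
      · exact le_rfl
    omega

/-- every profile admits a stable matching -/
theorem exists_stable [Fintype U] [Fintype W] (P : Profile U W) : ∃ M, IsStable P M := by
  classical
  suffices h : ∀ n (Q : Profile U W), gsTotal Q ≤ n → gsInv P Q → ∃ M, IsStable P M by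
    refine h (gsTotal P) P le_rfl ⟨fun u => List.Sublist.refl _, fun w => List.Sublist.refl _,
      fun u w h1 h2 => iff_of_true h1 h2, fun u w h1 _ h3 => absurd h1 h3⟩
  intro n
  induction n with
  | zero =>
    intro Q hQ hInv
    have hu0 : ∀ u, Q.prefU u = [] := by
      intro u
      have : (Q.prefU u).length ≤ 0 := by
        have h1 : (Q.prefU u).length ≤ ∑ x, (Q.prefU x).length :=
          Finset.single_le_sum (f := fun x => (Q.prefU x).length) (fun i _ => Nat.zero_le _) (Finset.mem_univ u)
        unfold gsTotal at hQ
        omega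
      exact List.length_eq_zero_iff.mp (Nat.le_zero.mp this)
    apply gs_final P Q hInv
    · intro u w hw; rw [hu0 u] at hw; simp at hw
    · intro u w u' hh; rw [hu0 u] at hh; simp at hh
  | succ n ih =>
    intro Q hQ hInv
    by_cases hclE : ∃ u w, w ∈ Q.prefU u ∧ u ∉ Q.prefW w
    · obtain ⟨u, w, hw, hu⟩ := hclE
      obtain ⟨Q', hInv', hlt⟩ := gs_cleanup P Q hInv hw hu
      exact ih Q' (by omega) hInv'
    · push_neg at hclE
      by_cases hprE : ∃ u w u', (Q.prefU u).head? = some w ∧ u' ∈ Q.prefW w ∧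
          (P.prefW w).idxOf u < (P.prefW w).idxOf u'
      · obtain ⟨u, w, u', hh, hu', hlt⟩ := hprE
        obtain ⟨Q', hInv', hlt'⟩ := gs_propose P Q hInv hclE hh hu' hlt
        exact ih Q' (by omega) hInv'
      · push_neg at hprE
        exact gs_final P Q hInv hclE (fun u w u' hh hm => hprE u w u' hh hm)

-- ### Part F : the rural hospitals theorem and final assembly

lemma unmatchedSet_eq [Fintype U] [Fintype W] {P : Profile U W} {M : Matching U W}
    (hM : IsStable P M) :
    UnmatchedSet P =
      {a | Sum.elim (fun u => M.mu u = none) (fun w => M.mw w = none) a} := by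
  ext a
  constructor
  · intro h; exact h M hM
  · intro h M' hM'
    cases a with
    | inl u =>
      simp only [Set.mem_setOf_eq, Sum.elim_inl] at h ⊢
      by_contra h2
      obtain ⟨n, v, _, hexc⟩ := chain_lemma_U hM hM' (fun u => rfl) (fun w => rfl)
        (fun _ => False) (fun _ => False)
        (fun u _ => Agree.refl _) (fun w _ => Agree.refl _) u h h2
      cases v <;> exact hexc
    | inr w =>
      simp only [Set.mem_setOf_eq, Sum.elim_inr] at h ⊢
      by_contra h2
      obtain ⟨n, v, _, hexc⟩ := chain_lemma_W hM hM' (fun u => rfl) (fun w => rfl)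
        (fun _ => False) (fun _ => False)
        (fun u _ => Agree.refl _) (fun w _ => Agree.refl _) w h h2
      cases v <;> exact hexc

lemma dist_one_extract [Fintype U] [Fintype W] {P1 P2 : Profile U W}
    (h : profDist P1 P2 = 1) :
    (∀ u, (P1.prefU u).toFinset = (P2.prefU u).toFinset) ∧
    (∀ w, (P1.prefW w).toFinset = (P2.prefW w).toFinset) ∧
    ∃ x₀ : U ⊕ W, (∀ u, Sum.inl u ≠ x₀ → Agree (P1.prefU u) (P2.prefU u)) ∧
      (∀ w, Sum.inr w ≠ x₀ → Agree (P1.prefW w) (P2.prefW w)) := by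
  classical
  have hle1 : ∀ u, listDist (P1.prefU u) (P2.prefU u) ≤ 1 := by
    intro u
    rw [← h]
    unfold profDist
    calc listDist (P1.prefU u) (P2.prefU u)
        ≤ ∑ x, listDist (P1.prefU x) (P2.prefU x) :=
          Finset.single_le_sum (f := fun x => listDist (P1.prefU x) (P2.prefU x))
            (fun i _ => zero_le) (Finset.mem_univ u)
      _ ≤ _ := le_self_add
  have hle2 : ∀ w, listDist (P1.prefW w) (P2.prefW w) ≤ 1 := by
    intro w
    rw [← h]
    unfold profDist
    calc listDist (P1.prefW w) (P2.prefW w)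
        ≤ ∑ x, listDist (P1.prefW x) (P2.prefW x) :=
          Finset.single_le_sum (f := fun x => listDist (P1.prefW x) (P2.prefW x))
            (fun i _ => zero_le) (Finset.mem_univ w)
      _ ≤ _ := le_add_self
  have hFU : ∀ u, (P1.prefU u).toFinset = (P2.prefU u).toFinset := by
    intro u
    by_contra hne
    have h2 := hle1 u
    rw [listDist, if_neg hne] at h2
    exact absurd h2 (by simp)
  have hFW : ∀ w, (P1.prefW w).toFinset = (P2.prefW w).toFinset := by
    intro w
    by_contra hne
    have h2 := hle2 w
    rw [listDist, if_neg hne] at h2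
    exact absurd h2 (by simp)
  refine ⟨hFU, hFW, ?_⟩
  set dU : U → ℕ := fun u => discordant (P1.prefU u) (P2.prefU u) with hdU
  set dW : W → ℕ := fun w => discordant (P1.prefW w) (P2.prefW w) with hdW
  have hsum : (∑ u, dU u) + (∑ w, dW w) = 1 := by
    have e1 : ∀ u, listDist (P1.prefU u) (P2.prefU u) = ((dU u : ℕ) : ℕ∞) := by
      intro u; rw [listDist, if_pos (hFU u)]
    have e2 : ∀ w, listDist (P1.prefW w) (P2.prefW w) = ((dW w : ℕ) : ℕ∞) := by
      intro w; rw [listDist, if_pos (hFW w)]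
    have : ((((∑ u, dU u) + (∑ w, dW w) : ℕ)) : ℕ∞) = ((1 : ℕ) : ℕ∞) := by
      push_cast
      rw [← Nat.cast_sum, ← Nat.cast_sum]
      rw [← h]
      unfold profDist
      rw [Finset.sum_congr rfl (fun u _ => e1 u), Finset.sum_congr rfl (fun w _ => e2 w)]
      push_cast
      rfl
    exact_mod_cast this
  -- agreement for agents with zero discordance
  have hagU : ∀ u, dU u = 0 → Agree (P1.prefU u) (P2.prefU u) := fun u hu =>
    agree_of_discordant_zero (P1.nodupU u) (P2.nodupU u) (hFU u) hu
  have hagW : ∀ w, dW w = 0 → Agree (P1.prefW w) (P2.prefW w) := fun w hw =>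
    agree_of_discordant_zero (P1.nodupW w) (P2.nodupW w) (hFW w) hw
  rcases Nat.eq_zero_or_pos (∑ u, dU u) with hU0 | hUpos
  · -- the swap is on the W side
    have hW1 : (∑ w, dW w) = 1 := by omega
    have hallU : ∀ u, dU u = 0 := by
      intro u
      have := Finset.single_le_sum (f := dU) (fun i _ => Nat.zero_le _) (Finset.mem_univ u)
      omega
    obtain ⟨w₀, hw₀⟩ : ∃ w₀, dW w₀ ≠ 0 := by
      by_contra hno
      push_neg at hno
      rw [Finset.sum_eq_zero (fun w _ => hno w)] at hW1
      omega
    refine ⟨Sum.inr w₀, fun u _ => hagU u (hallU u), fun w hw => ?_⟩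
    have hwne : w ≠ w₀ := fun hh => hw (by rw [hh])
    apply hagW
    have hsub : ({w₀, w} : Finset W) ⊆ Finset.univ := Finset.subset_univ _
    have h2 : dW w₀ + dW w ≤ ∑ x, dW x := by
      rw [← Finset.sum_pair (Ne.symm hwne)]
      exact Finset.sum_le_sum_of_subset hsub
    omega
  · -- the swap is on the U side
    have hU1 : (∑ u, dU u) = 1 := by
      have h1 : (∑ w, dW w) = 0 := by omega
      omega
    have hallW : ∀ w, dW w = 0 := by
      intro w
      have := Finset.single_le_sum (f := dW) (fun i _ => Nat.zero_le _) (Finset.mem_univ w)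
      omega
    obtain ⟨u₀, hu₀⟩ : ∃ u₀, dU u₀ ≠ 0 := by
      by_contra hno
      push_neg at hno
      rw [Finset.sum_eq_zero (fun u _ => hno u)] at hU1
      omega
    refine ⟨Sum.inl u₀, fun u hu => ?_, fun w _ => hagW w (hallW w)⟩
    have hune : u ≠ u₀ := fun hh => hu (by rw [hh])
    apply hagU
    have h2 : dU u₀ + dU u ≤ ∑ x, dU x := by
      rw [← Finset.sum_pair (Ne.symm hune)]
      exact Finset.sum_le_sum_of_subset (Finset.subset_univ _)
    omega


/-- If two profiles are at swap distance `1`, then the sets of agents left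
unmatched by stable matchings differ by at most two agents. -/
theorem unmatched_sets_close_for_one_swap
    {U W : Type} [DecidableEq U] [DecidableEq W] [Fintype U] [Fintype W]
    (P1 P2 : Profile U W) (h : profDist P1 P2 = 1) :
    (symmDiff (UnmatchedSet P1) (UnmatchedSet P2)).ncard ≤ 2 := by
    classical
  obtain ⟨hFU, hFW, x₀, hAU0, hAW0⟩ := dist_one_extract h
  obtain ⟨M1, hM1⟩ := exists_stable P1
  obtain ⟨M2, hM2⟩ := exists_stable P2
  have hS1 := unmatchedSet_eq hM1
  have hS2 := unmatchedSet_eq hM2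
  set EU : U → Prop := fun u => Sum.inl u = x₀ with hEU
  set EW : W → Prop := fun w => Sum.inr w = x₀ with hEW
  have elim_eq : ∀ v : U ⊕ W, Sum.elim EU EW v → v = x₀ := by
    intro v hv; cases v <;> exact hv
  set A : Set (U ⊕ W) := {z | ChainStart M1 M2 z ∧ ∃ n, itOpt (stp M1 M2) z n = some x₀}
    with hA
  set B : Set (U ⊕ W) := {z | ChainStart M2 M1 z ∧ ∃ n, itOpt (stp M2 M1) z n = some x₀}
    with hB
  have hAs : A.Subsingleton := by
    rintro z ⟨hz, n, hn⟩ z' ⟨hz', n', hn'⟩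
    exact chainStart_unique hz hz' hn hn'
  have hBs : B.Subsingleton := by
    rintro z ⟨hz, n, hn⟩ z' ⟨hz', n', hn'⟩
    exact chainStart_unique hz hz' hn hn'
  have hsub : symmDiff (UnmatchedSet P1) (UnmatchedSet P2) ⊆ A ∪ B := by
    intro z hz
    rw [hS1, hS2] at hz
    rw [Set.mem_symmDiff] at hz
    cases z with
    | inl u =>
      simp only [Set.mem_setOf_eq, Sum.elim_inl] at hz
      rcases hz with ⟨h1, h2⟩ | ⟨h1, h2⟩
      · obtain ⟨n, v, hit, hexc⟩ := chain_lemma_U hM1 hM2 hFU hFW EU EW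
          (fun u hu => hAU0 u hu) (fun w hw => hAW0 w hw) u h1 h2
        exact Or.inl ⟨h1, n, (elim_eq v hexc) ▸ hit⟩
      · obtain ⟨n, v, hit, hexc⟩ := chain_lemma_U hM2 hM1
          (fun u => (hFU u).symm) (fun w => (hFW w).symm) EU EW
          (fun u hu => Agree.symm (hFU u) (hAU0 u hu))
          (fun w hw => Agree.symm (hFW w) (hAW0 w hw)) u h1 h2
        exact Or.inr ⟨h1, n, (elim_eq v hexc) ▸ hit⟩
    | inr w =>
      simp only [Set.mem_setOf_eq, Sum.elim_inr] at hz
      rcases hz with ⟨h1, h2⟩ | ⟨h1, h2⟩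
      · obtain ⟨n, v, hit, hexc⟩ := chain_lemma_W hM1 hM2 hFU hFW EU EW
          (fun u hu => hAU0 u hu) (fun w hw => hAW0 w hw) w h1 h2
        exact Or.inr ⟨h1, n, (elim_eq v hexc) ▸ hit⟩
      · obtain ⟨n, v, hit, hexc⟩ := chain_lemma_W hM2 hM1
          (fun u => (hFU u).symm) (fun w => (hFW w).symm) EU EW
          (fun u hu => Agree.symm (hFU u) (hAU0 u hu))
          (fun w hw => Agree.symm (hFW w) (hAW0 w hw)) w h1 h2
        exact Or.inl ⟨h1, n, (elim_eq v hexc) ▸ hit⟩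
  have hAcard : A.ncard ≤ 1 := by
    rcases hAs.eq_empty_or_singleton with h' | ⟨a, h'⟩
    · rw [h']; simp
    · rw [h']; simp
  have hBcard : B.ncard ≤ 1 := by
    rcases hBs.eq_empty_or_singleton with h' | ⟨a, h'⟩
    · rw [h']; simp
    · rw [h']; simp
  calc (symmDiff (UnmatchedSet P1) (UnmatchedSet P2)).ncard
      ≤ (A ∪ B).ncard := Set.ncard_le_ncard hsub (Set.toFinite _)
    _ ≤ A.ncard + B.ncard := Set.ncard_union_le A B
    _ ≤ 2 := by omega
end
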